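/- arXiv:2302.13113 — 2 statements merged into one kernel-verified Lean document; each statement's English description precedes it below -/
import Mathlib

section
/- In the setting of the push-up lemma (sibling weakly-complete subtrees T of height h₂ and S of height h₁, with h₂ > h₁ where h₁ is measured after the move and h₂ before, and R the rest of the tree G on n nodes with |V(T)| + |V(S)| ≤ n/(9k)), the quantity Δ₃ = Σ_{w ∈ V(R)} d_G(u,w) − Σ_{w ∈ V(R)} d_G(v,w), where u is the moved leaf's old position and v its new position, satisfies Δ₃ = (h₂ − h₁)·|V(R)| ≥ (h₂ − h₁)·(9k − 1)·(|V(T)| + |V(S)|) > 8k·|V(T)|. -/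
inductive KTree : Type where
  | node : ℕ → List KTree → KTree

namespace KTree

instance : Inhabited KTree := ⟨node 0 []⟩

def rootKey : KTree → ℕ
  | node x _ => x

def children : KTree → List KTree
  | node _ cs => cs

def keys : KTree → List ℕ
  | node x cs => x :: (cs.attach.map (fun c => c.1.keys)).flatten
decreasing_by
  have := List.sizeOf_lt_of_mem c.2
  simp only [KTree.node.sizeOf_spec]
  omega

def size (t : KTree) : ℕ := t.keys.length

def height : KTree → ℕ
  | node _ cs => (cs.attach.map (fun c => c.1.height + 1)).foldr max 0
decreasing_by
  have := List.sizeOf_lt_of_mem c.2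
  simp only [KTree.node.sizeOf_spec]
  omega

def countAt : KTree → ℕ → ℕ
  | node _ _, 0 => 1
  | node _ cs, d + 1 => ((cs.attach.map (fun c => c.1.countAt d)).foldr (· + ·) 0)

def countsAt : KTree → ℕ → List ℕ
  | node _ cs, 0 => [cs.length]
  | node _ cs, d + 1 => (cs.attach.map (fun c => c.1.countsAt d)).flatten

def edges : KTree → List (ℕ × ℕ)
  | node x cs => (cs.map fun c => (x, c.rootKey)) ++ (cs.attach.map (fun c => c.1.edges)).flatten
decreasing_by
  have := List.sizeOf_lt_of_mem c.2
  simp only [KTree.node.sizeOf_spec]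
  omega

def graph (t : KTree) : SimpleGraph ℕ :=
  SimpleGraph.fromRel (fun a b => (a, b) ∈ t.edges)

noncomputable def dist (t : KTree) (u v : ℕ) : ℕ := t.graph.dist u v

noncomputable def totalDist (t : KTree) (D : ℕ → ℕ → ℕ) : ℕ :=
  ∑ u ∈ t.keys.toFinset, ∑ v ∈ t.keys.toFinset, t.dist u v * D u v

noncomputable def totalDistUniform (t : KTree) : ℕ :=
  ∑ u ∈ t.keys.toFinset, ∑ v ∈ t.keys.toFinset, t.dist u v

def DegLE (k : ℕ) : KTree → Prop
  | node _ cs => cs.length ≤ k ∧ ∀ c ∈ cs, DegLE k c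

def Separated : KTree → Prop
  | node _ cs =>
      (cs.Pairwise fun a b =>
        (∀ u ∈ a.keys, ∀ v ∈ b.keys, u < v) ∨ (∀ u ∈ a.keys, ∀ v ∈ b.keys, v < u)) ∧
      ∀ c ∈ cs, Separated c

def IsKAST (k i j : ℕ) (t : KTree) : Prop :=
  t.DegLE k ∧ t.Separated ∧ t.keys.Nodup ∧ ∀ m, m ∈ t.keys ↔ m ∈ Finset.Icc i j

def WeaklyComplete (k : ℕ) (t : KTree) : Prop :=
  t.DegLE k ∧ ∀ d, d < t.height → t.countAt d = k ^ d

def subtreeAt : KTree → List ℕ → Option KTree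
  | t, [] => some t
  | node _ cs, i :: is =>
    match cs[i]? with
    | some c => subtreeAt c is
    | none => none

def replaceAt : KTree → List ℕ → KTree → KTree
  | _, [], r => r
  | node x cs, i :: is, r => node x (cs.set i (replaceAt (cs.getD i default) is r))

def attachLeaf : KTree → List ℕ → ℕ → KTree
  | node x cs, [], u => node x (cs ++ [node u []])
  | node x cs, i :: is, u => node x (cs.set i (attachLeaf (cs.getD i default) is u))

def IsSubtreeOf (s t : KTree) : Prop := ∃ pos, subtreeAt t pos = some s

def graphAvoiding (t : KTree) (c : ℕ) : SimpleGraph ℕ :=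
  SimpleGraph.fromRel (fun a b => (a, b) ∈ t.edges ∧ a ≠ c ∧ b ≠ c)

def IsCentroid (t : KTree) (c : ℕ) : Prop :=
  c ∈ t.keys ∧ ∀ w ∈ t.keys, w ≠ c →
    2 * {w' | w' ∈ t.keys ∧ (t.graphAvoiding c).Reachable w w'}.ncard ≤ t.size

def uniformDemand : ℕ → ℕ → ℕ := fun u v => if u = v then 0 else 1

def IsOptimal (k n : ℕ) (T : KTree) : Prop :=
  IsKAST k 1 n T ∧ ∀ T' : KTree, IsKAST k 1 n T' → totalDistUniform T ≤ totalDistUniform T'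

def truncate : ℕ → KTree → KTree
  | 0, node x _ => node x []
  | d + 1, node x cs => node x (cs.attach.map (fun c => truncate d c.1))

def LastLevelPartial (k : ℕ) (t : KTree) : Prop :=
  1 ≤ t.height ∧ 0 < t.countAt t.height ∧ t.countAt t.height < k * t.countAt (t.height - 1)

def Packed (k : ℕ) (t : KTree) : Prop :=
  ∀ i j : ℕ, i < j → 0 < (t.countsAt (t.height - 1)).getD j 0 →
    (t.countsAt (t.height - 1)).getD i 0 = k

def Reorder : KTree → KTree → Prop
  | node x cs, node y ds =>
      x = y ∧ ∃ e : Fin cs.length ≃ Fin ds.length,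
        ∀ i : Fin cs.length, Reorder cs[i] ds[e i]
termination_by t _ => sizeOf t
decreasing_by
  have h1 : cs[i] ∈ cs := List.getElem_mem _
  have := List.sizeOf_lt_of_mem h1
  simp only [KTree.node.sizeOf_spec]
  omega

def IsQuasiOptimal (k n : ℕ) (t : KTree) : Prop :=
  t.keys.Nodup ∧ (∀ m, m ∈ t.keys ↔ m ∈ Finset.Icc 1 n) ∧
  t.children.length = k + 1 ∧
  (∀ c ∈ t.children, WeaklyComplete k c) ∧
  (∀ d, 0 < d → d < t.height → t.countAt d = (k + 1) * k ^ (d - 1)) ∧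
  Packed k t

end KTree

open KTree

/-!
The subtrees `T` and `S` hang from their common parent `x`: every edge leaving either of them
ends at `x`, before and after the move. Hence for `w ∈ R` both `d_G(u, w) = d_G(u, x) + d_G(x, w)`
and `d_G'(u, w) = d_G'(u, x) + d_G'(x, w)`, while `d_G(x, w) = d_G'(x, w)` because a shortest
`x`–`w` path never enters `T ∪ S`, the only place where `G` and `G'` differ. The distance from `x`
to `u` is one more than the depth of `u` in its subtree, i.e. `h₂ + 1` before and `h₁ + 1` after,
so every `w ∈ R` contributes `h₂ - h₁` to `Δ₃`. The inequalities then follow from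
`|R| ≥ n - |T| - |S| ≥ (9k - 1)(|T| + |S|)` and `x ∈ R`.
-/

namespace SimpleGraph

variable {V : Type*}

def HangsFrom (G : SimpleGraph V) (A : Set V) (x : V) : Prop :=
  ∀ a b, G.Adj a b → a ∈ A → b ∉ A → b = x

variable {G H : SimpleGraph V} {A B : Set V} {x : V}

theorem HangsFrom.union (hA : G.HangsFrom A x) (hB : G.HangsFrom B x) :
    G.HangsFrom (A ∪ B) x := by
  rintro a b hab (ha | ha) hb
  · exact hA a b hab ha fun h => hb (Or.inl h)
  · exact hB a b hab ha fun h => hb (Or.inr h)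

theorem HangsFrom.mem_support (h : G.HangsFrom A x) {a b : V} (p : G.Walk a b) (ha : a ∈ A)
    (hb : b ∉ A) : x ∈ p.support := by
  induction p with
  | nil => exact absurd ha hb
  | @cons a c b hac q ih =>
    by_cases hc : c ∈ A
    · exact List.mem_cons_of_mem _ (ih hc hb)
    · exact h a c hac ha hc ▸ List.mem_cons_of_mem _ q.start_mem_support

theorem HangsFrom.dist_eq_add (h : G.HangsFrom A x) {a b : V} (ha : a ∈ A) (hb : b ∉ A)
    (hr : G.Reachable a b) : G.dist a b = G.dist a x + G.dist x b := by
  classical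
  obtain ⟨p, hp⟩ := hr.exists_walk_length_eq_dist
  have hx := h.mem_support p ha hb
  refine le_antisymm (Reachable.dist_triangle_left ⟨p.takeUntil x hx⟩ b) ?_
  rw [← hp, ← p.take_spec hx, Walk.length_append]
  exact add_le_add (SimpleGraph.dist_le _) (SimpleGraph.dist_le _)

theorem HangsFrom.not_mem_support_of_isPath (h : G.HangsFrom A x) (hx : x ∉ A) {a b : V}
    {p : G.Walk a b} (hp : p.IsPath) (ha : a ∉ A) (hb : b ∉ A) {v : V} (hv : v ∈ p.support) :
    v ∉ A := by
  classical
  -- A path entering `A` would have to pass through `x` both before and after `v`.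
  intro hvA
  have hxr : x ∈ (p.dropUntil v hv).support := h.mem_support _ hvA hb
  have hxq : x ∈ (p.takeUntil v hv).support := by
    simpa using h.mem_support (p.takeUntil v hv).reverse hvA ha
  rw [← Walk.cons_tail_support, List.mem_cons] at hxr
  have hnd := hp.support_nodup
  rw [← p.take_spec hv, Walk.support_append] at hnd
  exact List.disjoint_of_nodup_append hnd hxq (hxr.resolve_left fun e => hx (e ▸ hvA))

theorem HangsFrom.dist_le (h : G.HangsFrom A x) (hx : x ∉ A)
    (hGH : ∀ a b, a ∉ A → b ∉ A → G.Adj a b → H.Adj a b) {a b : V} (ha : a ∉ A) (hb : b ∉ A)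
    (hr : G.Reachable a b) : H.dist a b ≤ G.dist a b := by
  obtain ⟨p, hp, hlen⟩ := hr.exists_path_of_dist
  have hout := fun {v} (hv : v ∈ p.support) => h.not_mem_support_of_isPath hx hp ha hb hv
  have hpH : ∀ e ∈ p.edges, e ∈ H.edgeSet := by
    intro e he
    induction e using Sym2.ind with
    | h c d =>
      exact hGH c d (hout (p.fst_mem_support_of_mem_edges he))
        (hout (p.snd_mem_support_of_mem_edges he)) (p.adj_of_mem_edges he)
  rw [← hlen, ← p.length_transfer hpH]
  exact SimpleGraph.dist_le _

end SimpleGraph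

theorem List.sum_set_add_getElem {M : Type*} [AddCommMonoid M] (L : List M) {n : ℕ}
    (hn : n < L.length) (a : M) : (L.set n a).sum + L[n] = L.sum + a := by
  conv_rhs => rw [← L.set_getElem_self hn]
  rw [List.sum_set, List.sum_set, if_pos hn, if_pos (by simpa using hn)]
  abel

theorem List.length_le_card_sdiff_union_add {α : Type*} [DecidableEq α] {l l₁ l₂ : List α}
    (hl : l.Nodup) :
    l.length ≤ (l.toFinset \ (l₁.toFinset ∪ l₂.toFinset)).card + l₁.length + l₂.length := by
  have h₁ := Finset.card_le_card_sdiff_add_card (s := l.toFinset) (t := l₁.toFinset ∪ l₂.toFinset)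
  have h₂ := (Finset.card_union_le _ _).trans (add_le_add l₁.toFinset_card_le l₂.toFinset_card_le)
  rw [List.toFinset_card_of_nodup hl] at h₁
  omega

namespace KTree

@[induction_eliminator]
theorem induction {motive : KTree → Prop}
    (node : ∀ x cs, (∀ c ∈ cs, motive c) → motive (node x cs)) : ∀ t, motive t
  | .node x cs => node x cs fun c _ => induction node c
decreasing_by
  have := List.sizeOf_lt_of_mem ‹c ∈ cs›
  simp only [KTree.node.sizeOf_spec]
  omega

@[simp]
theorem keys_node (x : ℕ) (cs : List KTree) :
    (node x cs).keys = x :: (cs.map keys).flatten := by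
  rw [keys, List.attach_map_val]

@[simp]
theorem edges_node (x : ℕ) (cs : List KTree) :
    (node x cs).edges = (cs.map fun c => (x, c.rootKey)) ++ (cs.map edges).flatten := by
  rw [edges, List.attach_map_val]

theorem mem_edges_node {x a b : ℕ} {cs : List KTree} :
    (a, b) ∈ (node x cs).edges ↔ ∃ c ∈ cs, (a = x ∧ b = c.rootKey) ∨ (a, b) ∈ c.edges := by
  simp only [edges_node, List.mem_append, List.mem_map, List.mem_flatten, Prod.mk.injEq]
  grind

theorem rootKey_mem_keys (t : KTree) : t.rootKey ∈ t.keys := by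
  cases t
  simp [rootKey]

theorem keys_sublist_of_mem {x : ℕ} {c : KTree} {cs : List KTree} (hc : c ∈ cs) :
    c.keys.Sublist (node x cs).keys := by
  rw [keys_node]
  exact (List.sublist_flatten_of_mem (List.mem_map_of_mem hc)).trans (List.sublist_cons_self _ _)

theorem edges_sublist_of_mem {x : ℕ} {c : KTree} {cs : List KTree} (hc : c ∈ cs) :
    c.edges.Sublist (node x cs).edges := by
  rw [edges_node]
  exact (List.sublist_flatten_of_mem (List.mem_map_of_mem hc)).trans (List.sublist_append_right _ _)

theorem mem_keys_of_mem_edges {t : KTree} {a b : ℕ} (h : (a, b) ∈ t.edges) :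
    a ∈ t.keys ∧ b ∈ t.keys := by
  induction t generalizing a b with
  | node x cs ih =>
    obtain ⟨c, hc, ⟨rfl, rfl⟩ | he⟩ := mem_edges_node.1 h
    · exact ⟨by simp, (keys_sublist_of_mem hc).subset c.rootKey_mem_keys⟩
    · exact (ih c hc he).imp (fun h => (keys_sublist_of_mem hc).subset h)
        (fun h => (keys_sublist_of_mem hc).subset h)

theorem nodup_keys_of_mem {x : ℕ} {cs : List KTree} (h : (node x cs).keys.Nodup) {c : KTree}
    (hc : c ∈ cs) : c.keys.Nodup :=
  (keys_sublist_of_mem hc).nodup h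

theorem not_mem_keys_of_mem {x : ℕ} {cs : List KTree} (h : (node x cs).keys.Nodup) {c : KTree}
    (hc : c ∈ cs) : x ∉ c.keys := by
  rw [keys_node, List.nodup_cons] at h
  exact fun hx => h.1 (List.mem_flatten_of_mem (List.mem_map_of_mem hc) hx)

theorem eq_of_mem_keys_of_mem {x : ℕ} {cs : List KTree} (h : (node x cs).keys.Nodup)
    {c c' : KTree} (hc : c ∈ cs) (hc' : c' ∈ cs) {a : ℕ} (ha : a ∈ c.keys)
    (ha' : a ∈ c'.keys) : c = c' := by
  rw [keys_node, List.nodup_cons, List.nodup_flatten, List.pairwise_map] at h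
  have : Std.Symm fun c c' : KTree => c.keys.Disjoint c'.keys := ⟨fun _ _ h => h.symm⟩
  by_contra hne
  exact h.2.2.forall hc hc' hne ha ha'

theorem subtreeAt_cons_eq_some {x i : ℕ} {cs : List KTree} {is : List ℕ} {s : KTree} :
    subtreeAt (node x cs) (i :: is) = some s ↔ ∃ c, cs[i]? = some c ∧ subtreeAt c is = some s := by
  rw [subtreeAt]
  cases cs[i]? <;> simp

theorem sublist_of_subtreeAt :
    ∀ {pos : List ℕ} {t s : KTree}, subtreeAt t pos = some s →
      s.keys.Sublist t.keys ∧ s.edges.Sublist t.edges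
  | [], t, s, h => by
    rw [subtreeAt, Option.some_inj] at h
    exact h ▸ ⟨.refl _, .refl _⟩
  | _ :: _, node _ _, _, h => by
    obtain ⟨c, hc, hcs⟩ := subtreeAt_cons_eq_some.1 h
    have hmem := List.mem_of_getElem? hc
    obtain ⟨hk, he⟩ := sublist_of_subtreeAt hcs
    exact ⟨hk.trans (keys_sublist_of_mem hmem), he.trans (edges_sublist_of_mem hmem)⟩

theorem snd_ne_rootKey {t : KTree} (hnd : t.keys.Nodup) {a b : ℕ} (h : (a, b) ∈ t.edges) :
    b ≠ t.rootKey := by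
  cases t with
  | node x cs =>
    show b ≠ x
    rintro rfl
    obtain ⟨c, hc, ⟨-, hb⟩ | he⟩ := mem_edges_node.1 h
    · exact not_mem_keys_of_mem hnd hc (hb ▸ c.rootKey_mem_keys)
    · exact not_mem_keys_of_mem hnd hc (mem_keys_of_mem_edges he).2

theorem fst_eq_of_mem_edges {t : KTree} (hnd : t.keys.Nodup) {a a' b : ℕ}
    (h : (a, b) ∈ t.edges) (h' : (a', b) ∈ t.edges) : a = a' := by
  induction t with
  | node x cs ih =>
    have hb : ∀ {a c}, c ∈ cs → (a = x ∧ b = c.rootKey) ∨ (a, b) ∈ c.edges → b ∈ c.keys := by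
      rintro a c - (⟨-, rfl⟩ | he)
      exacts [c.rootKey_mem_keys, (mem_keys_of_mem_edges he).2]
    obtain ⟨c, hc, hac⟩ := mem_edges_node.1 h
    obtain ⟨c', hc', hac'⟩ := mem_edges_node.1 h'
    obtain rfl := eq_of_mem_keys_of_mem hnd hc hc' (hb hc hac) (hb hc' hac')
    have hndc := nodup_keys_of_mem hnd hc
    rcases hac with ⟨rfl, rfl⟩ | he <;> rcases hac' with ⟨rfl, hb'⟩ | he'
    · rfl
    · exact absurd rfl (snd_ne_rootKey hndc he')
    · exact absurd hb' (snd_ne_rootKey hndc he)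
    · exact ih c hc hndc he he'

theorem mem_edges_of_mem_children {x : ℕ} {cs : List KTree} (hnd : (node x cs).keys.Nodup)
    {c : KTree} (hc : c ∈ cs) {a b : ℕ} (h : (a, b) ∈ (node x cs).edges) (ha : a ∈ c.keys) :
    (a, b) ∈ c.edges := by
  obtain ⟨d, hd, ⟨rfl, -⟩ | he⟩ := mem_edges_node.1 h
  · exact absurd ha (not_mem_keys_of_mem hnd hc)
  · exact eq_of_mem_keys_of_mem hnd hd hc (mem_keys_of_mem_edges he).1 ha ▸ he

theorem mem_edges_of_subtreeAt :
    ∀ {pos : List ℕ} {t s : KTree}, t.keys.Nodup → subtreeAt t pos = some s →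
      ∀ {a b : ℕ}, (a, b) ∈ t.edges → a ∈ s.keys → (a, b) ∈ s.edges
  | [], t, s, _, hs, _, _, h, _ => by
    rw [subtreeAt, Option.some_inj] at hs
    exact hs ▸ h
  | _ :: _, node _ _, _, hnd, hs, _, _, h, ha => by
    obtain ⟨c, hc, hcs⟩ := subtreeAt_cons_eq_some.1 hs
    have hmem := List.mem_of_getElem? hc
    refine mem_edges_of_subtreeAt (nodup_keys_of_mem hnd hmem) hcs ?_ ha
    exact mem_edges_of_mem_children hnd hmem h ((sublist_of_subtreeAt hcs).1.subset ha)

theorem exists_mem_edges_of_ne_rootKey {s : KTree} {b : ℕ} (hb : b ∈ s.keys)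
    (hne : b ≠ s.rootKey) : ∃ a, (a, b) ∈ s.edges := by
  induction s with
  | node x cs ih =>
    simp only [keys_node, List.mem_cons, List.mem_flatten, List.mem_map] at hb
    obtain rfl | ⟨_, ⟨c, hc, rfl⟩, hbc⟩ := hb
    · exact absurd rfl hne
    by_cases hroot : b = c.rootKey
    · exact ⟨x, mem_edges_node.2 ⟨c, hc, .inl ⟨rfl, hroot⟩⟩⟩
    · obtain ⟨a, ha⟩ := ih c hc hbc hroot
      exact ⟨a, mem_edges_node.2 ⟨c, hc, .inr ha⟩⟩

theorem graph_hangsFrom_of_mem {t : KTree} (hnd : t.keys.Nodup) {pos : List ℕ} {y : ℕ}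
    {ds : List KTree} (hP : subtreeAt t pos = some (node y ds)) {s : KTree} (hs : s ∈ ds) :
    t.graph.HangsFrom {a | a ∈ s.keys} y := by
  obtain ⟨hkeys, hedges⟩ := sublist_of_subtreeAt hP
  have hndy := hkeys.nodup hnd
  have hsub : ∀ {e}, e ∈ s.edges → e ∈ t.edges :=
    fun he => hedges.subset ((edges_sublist_of_mem hs).subset he)
  intro a b hab ha hb
  rcases (SimpleGraph.fromRel_adj _ _ _).1 hab |>.2 with he | he
  · have := mem_edges_of_mem_children hndy hs (mem_edges_of_subtreeAt hnd hP he
      ((keys_sublist_of_mem hs).subset ha)) ha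
    exact absurd (mem_keys_of_mem_edges this).2 hb
  · by_cases hroot : a = s.rootKey
    · refine fst_eq_of_mem_edges hnd he (hedges.subset ?_)
      exact mem_edges_node.2 ⟨s, hs, .inl ⟨rfl, hroot⟩⟩
    · obtain ⟨a', ha'⟩ := exists_mem_edges_of_ne_rootKey ha hroot
      exact absurd (fst_eq_of_mem_edges hnd he (hsub ha') ▸ (mem_keys_of_mem_edges ha').1) hb

theorem graph_mono {s t : KTree} (h : s.edges ⊆ t.edges) : s.graph ≤ t.graph := by
  intro a b hab
  rw [graph, SimpleGraph.fromRel_adj] at hab ⊢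
  exact ⟨hab.1, hab.2.imp (fun he => h he) (fun he => h he)⟩

inductive AtDepth : KTree → ℕ → ℕ → Prop
  | root (x : ℕ) (cs : List KTree) : AtDepth (node x cs) x 0
  | child {x : ℕ} {cs : List KTree} {c : KTree} {a d : ℕ} :
      c ∈ cs → AtDepth c a d → AtDepth (node x cs) a (d + 1)

theorem AtDepth.mem_keys {t : KTree} {a d : ℕ} (h : AtDepth t a d) : a ∈ t.keys := by
  induction h with
  | root => simp
  | child hc _ ih => exact (keys_sublist_of_mem hc).subset ih

theorem atDepth_rootKey (t : KTree) : AtDepth t t.rootKey 0 := by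
  cases t
  exact .root _ _

theorem AtDepth.unique {t : KTree} {a d d' : ℕ} (hnd : t.keys.Nodup) (h : AtDepth t a d)
    (h' : AtDepth t a d') : d = d' := by
  induction h generalizing d' with
  | root x cs =>
    cases h' with
    | root => rfl
    | child hc h' => exact absurd h'.mem_keys (not_mem_keys_of_mem hnd hc)
  | child hc h ih =>
    cases h' with
    | root => exact absurd h.mem_keys (not_mem_keys_of_mem hnd hc)
    | child hc' h' =>
      obtain rfl := eq_of_mem_keys_of_mem hnd hc hc' h.mem_keys h'.mem_keys
      rw [ih (nodup_keys_of_mem hnd hc) h']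

theorem exists_atDepth_of_mem_edges {t : KTree} {a b : ℕ} (h : (a, b) ∈ t.edges) :
    ∃ d, AtDepth t a d ∧ AtDepth t b (d + 1) := by
  induction t with
  | node x cs ih =>
    obtain ⟨c, hc, ⟨rfl, rfl⟩ | he⟩ := mem_edges_node.1 h
    · exact ⟨0, .root _ _, .child hc (atDepth_rootKey c)⟩
    · obtain ⟨d, ha, hb⟩ := ih c hc he
      exact ⟨d + 1, .child hc ha, .child hc hb⟩

theorem AtDepth.subtreeAt : ∀ {pos : List ℕ} {t s : KTree} {a d : ℕ},
    subtreeAt t pos = some s → AtDepth s a d → AtDepth t a (d + pos.length)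
  | [], t, s, _, _, hs, h => by
    rw [KTree.subtreeAt, Option.some_inj] at hs
    exact hs ▸ h
  | _ :: _, node _ _, _, _, _, hs, h => by
    obtain ⟨c, hc, hcs⟩ := subtreeAt_cons_eq_some.1 hs
    exact .child (List.mem_of_getElem? hc) (h.subtreeAt hcs)

theorem AtDepth.exists_walk {t : KTree} {a d : ℕ} (hnd : t.keys.Nodup) (h : AtDepth t a d) :
    ∃ p : t.graph.Walk t.rootKey a, p.length = d := by
  induction h with
  | root => exact ⟨.nil, rfl⟩
  | @child x cs c a d hc _ ih =>
    obtain ⟨p, hp⟩ := ih (nodup_keys_of_mem hnd hc)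
    have hadj : (node x cs).graph.Adj (node x cs).rootKey c.rootKey :=
      (SimpleGraph.fromRel_adj _ _ _).2
        ⟨fun (hx : x = c.rootKey) => not_mem_keys_of_mem hnd hc (hx ▸ c.rootKey_mem_keys),
          .inl (mem_edges_node.2 ⟨c, hc, .inl ⟨rfl, rfl⟩⟩)⟩
    exact ⟨.cons hadj (p.mapLe (graph_mono (edges_sublist_of_mem hc).subset)), by simp [hp]⟩

theorem AtDepth.le_add_length {t : KTree} (hnd : t.keys.Nodup) {a b : ℕ}
    (p : t.graph.Walk a b) {da db : ℕ} (ha : AtDepth t a da) (hb : AtDepth t b db) :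
    da ≤ db + p.length := by
  induction p generalizing da with
  | nil => exact (ha.unique hnd hb).le
  | @cons a c b hac q ih =>
    have hdc : ∃ dc, AtDepth t c dc ∧ da ≤ dc + 1 := by
      rcases ((SimpleGraph.fromRel_adj _ _ _).1 hac).2 with he | he
      · obtain ⟨d, had, hcd⟩ := exists_atDepth_of_mem_edges he
        exact ⟨d + 1, hcd, (ha.unique hnd had).le.trans (by omega)⟩
      · obtain ⟨d, hcd, had⟩ := exists_atDepth_of_mem_edges he
        exact ⟨d, hcd, (ha.unique hnd had).le⟩
    obtain ⟨dc, hc, hle⟩ := hdc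
    rw [SimpleGraph.Walk.length_cons]
    have := ih hc hb
    omega

theorem dist_rootKey_eq_of_atDepth {t : KTree} (hnd : t.keys.Nodup) {pos : List ℕ} {s : KTree}
    (hs : subtreeAt t pos = some s) {a d : ℕ} (ha : AtDepth s a d) : t.dist s.rootKey a = d := by
  obtain ⟨hkeys, hedges⟩ := sublist_of_subtreeAt hs
  obtain ⟨p, hp⟩ := ha.exists_walk (hkeys.nodup hnd)
  have hle := graph_mono hedges.subset
  refine le_antisymm (hp ▸ p.length_mapLe hle ▸ t.graph.dist_le _) ?_
  obtain ⟨q, hq⟩ := (p.mapLe hle).reachable.symm.exists_walk_length_eq_dist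
  have := (ha.subtreeAt hs).le_add_length hnd q ((atDepth_rootKey s).subtreeAt hs)
  rw [dist, SimpleGraph.dist_comm]
  omega

theorem subtreeAt_replaceAt : ∀ {pos : List ℕ} {t s : KTree} (r : KTree),
    subtreeAt t pos = some s → subtreeAt (replaceAt t pos r) pos = some r
  | [], _, _, _, _ => rfl
  | _ :: _, node _ cs, _, r, h => by
    obtain ⟨c, hc, hcs⟩ := subtreeAt_cons_eq_some.1 h
    rw [replaceAt, List.getD_eq_getElem?_getD, hc, Option.getD_some, subtreeAt_cons_eq_some]
    exact ⟨_, List.getElem?_set_self (List.getElem?_eq_some_iff.1 hc).1, subtreeAt_replaceAt r hcs⟩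

theorem rootKey_replaceAt : ∀ {pos : List ℕ} {t s r : KTree},
    subtreeAt t pos = some s → r.rootKey = s.rootKey → (replaceAt t pos r).rootKey = t.rootKey
  | [], _, _, _, h, hr => by
    rw [subtreeAt, Option.some_inj] at h
    exact h ▸ hr
  | _ :: _, node _ _, _, _, _, _ => rfl

theorem apply_replaceAt_add {M : Type*} [AddCancelCommMonoid M] {f : KTree → M}
    {g : ℕ → List ℕ → M} (hf : ∀ x cs, f (node x cs) = g x (cs.map rootKey) + (cs.map f).sum) :
    ∀ {pos : List ℕ} {t s r : KTree}, subtreeAt t pos = some s → r.rootKey = s.rootKey →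
      f (replaceAt t pos r) + f s = f t + f r
  | [], _, _, _, h, _ => by
    rw [subtreeAt, Option.some_inj] at h
    rw [replaceAt, h, add_comm]
  | i :: pos, node x cs, s, r, h, hr => by
    obtain ⟨c, hc, hcs⟩ := subtreeAt_cons_eq_some.1 h
    obtain ⟨hi, rfl⟩ := List.getElem?_eq_some_iff.1 hc
    have ih := apply_replaceAt_add hf hcs hr
    have hroots : (cs.set i (replaceAt cs[i] pos r)).map rootKey = cs.map rootKey := by
      rw [List.map_set, rootKey_replaceAt hcs hr, ← List.map_set, List.set_getElem_self]
    have hsum := (cs.map f).sum_set_add_getElem (by simpa using hi) (f (replaceAt cs[i] pos r))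
    rw [← List.map_set, List.getElem_map] at hsum
    rw [replaceAt, List.getD_eq_getElem?_getD, hc, Option.getD_some, hf, hf, hroots]
    apply add_right_cancel (b := f cs[i])
    grind

theorem coe_keys_node (x : ℕ) (cs : List KTree) :
    ((node x cs).keys : Multiset ℕ) = {x} + (cs.map fun c => (c.keys : Multiset ℕ)).sum := by
  rw [keys_node, ← Multiset.cons_coe, ← Multiset.coe_join, Multiset.singleton_add, List.map_map]
  rfl

theorem coe_edges_node (x : ℕ) (cs : List KTree) :
    ((node x cs).edges : Multiset (ℕ × ℕ)) =
      ((cs.map rootKey).map (Prod.mk x) : Multiset (ℕ × ℕ)) +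
        (cs.map fun c => (c.edges : Multiset (ℕ × ℕ))).sum := by
  rw [edges_node, ← Multiset.coe_add, ← Multiset.coe_join, List.map_map, List.map_map]
  rfl

theorem apply_replaceAt_set_set_add {M : Type*} [AddCancelCommMonoid M] {f : KTree → M}
    {g : ℕ → List ℕ → M} (hf : ∀ x cs, f (node x cs) = g x (cs.map rootKey) + (cs.map f).sum)
    {t : KTree} {pos : List ℕ} {x : ℕ} {cs : List KTree} (hP : subtreeAt t pos = some (node x cs))
    {i j : ℕ} (hij : i ≠ j) {a b a' b' : KTree} (ha : cs[i]? = some a) (hb : cs[j]? = some b)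
    (ha' : a'.rootKey = a.rootKey) (hb' : b'.rootKey = b.rootKey) :
    f (replaceAt t pos (node x ((cs.set i a').set j b'))) + f a + f b = f t + f a' + f b' := by
  have h₁ : f (node x (cs.set i a')) + f a = f (node x cs) + f a' :=
    apply_replaceAt_add hf (pos := [i]) (t := node x cs) (by simp [subtreeAt, ha]) ha'
  have h₂ : f (node x ((cs.set i a').set j b')) + f b = f (node x (cs.set i a')) + f b' :=
    apply_replaceAt_add hf (pos := [j]) (t := node x (cs.set i a'))
      (by simp [subtreeAt, List.getElem?_set_ne hij, hb]) hb'
  have h₃ := apply_replaceAt_add hf hP (r := node x ((cs.set i a').set j b')) rfl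
  apply add_right_cancel (b := f (node x cs) + f (node x (cs.set i a')))
  grind

theorem attachLeaf_eq_replaceAt : ∀ {pos : List ℕ} {t s : KTree} (u : ℕ),
    subtreeAt t pos = some s → attachLeaf t pos u = replaceAt t pos (attachLeaf s [] u)
  | [], _, _, _, h => by
    rw [subtreeAt, Option.some_inj] at h
    rw [replaceAt, h]
  | _ :: _, node _ cs, _, u, h => by
    obtain ⟨c, hc, hcs⟩ := subtreeAt_cons_eq_some.1 h
    rw [attachLeaf, replaceAt, List.getD_eq_getElem?_getD, hc, Option.getD_some,
      attachLeaf_eq_replaceAt u hcs]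

theorem rootKey_attachLeaf (t : KTree) (pos : List ℕ) (u : ℕ) :
    (attachLeaf t pos u).rootKey = t.rootKey := by
  cases t
  cases pos <;> rfl

theorem coe_keys_attachLeaf {pos : List ℕ} {t s : KTree} (u : ℕ)
    (h : subtreeAt t pos = some s) :
    ((attachLeaf t pos u).keys : Multiset ℕ) = u ::ₘ t.keys := by
  have hleaf : ((attachLeaf s [] u).keys : Multiset ℕ) = u ::ₘ s.keys := by
    cases s with
    | node y cs =>
      simp only [attachLeaf, keys_node, Multiset.cons_coe, Multiset.coe_eq_coe]
      simpa using List.perm_append_singleton u (y :: (cs.map keys).flatten)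
  have := apply_replaceAt_add (f := fun t => (t.keys : Multiset ℕ)) (g := fun x _ => {x})
    coe_keys_node h (rootKey_attachLeaf s [] u)
  rw [attachLeaf_eq_replaceAt u h]
  apply add_right_cancel (b := (s.keys : Multiset ℕ))
  rw [this, hleaf, Multiset.add_cons, Multiset.cons_add]

theorem atDepth_attachLeaf {pos : List ℕ} {t s : KTree} (u : ℕ) (h : subtreeAt t pos = some s) :
    AtDepth (attachLeaf t pos u) u (1 + pos.length) := by
  rw [attachLeaf_eq_replaceAt u h]
  refine AtDepth.subtreeAt (subtreeAt_replaceAt _ h) ?_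
  cases s
  exact .child (List.mem_append_right _ (List.mem_singleton_self _)) (.root u [])

theorem exists_atDepth_of_mem_keys {t : KTree} {a : ℕ} (h : a ∈ t.keys) : ∃ d, AtDepth t a d := by
  induction t with
  | node x cs ih =>
    simp only [keys_node, List.mem_cons, List.mem_flatten, List.mem_map] at h
    obtain rfl | ⟨_, ⟨c, hc, rfl⟩, hac⟩ := h
    · exact ⟨0, .root _ _⟩
    · obtain ⟨d, hd⟩ := ih c hc hac
      exact ⟨d + 1, .child hc hd⟩

theorem reachable_of_mem_keys {t : KTree} (hnd : t.keys.Nodup) {a b : ℕ} (ha : a ∈ t.keys)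
    (hb : b ∈ t.keys) : t.graph.Reachable a b := by
  obtain ⟨_, hda⟩ := exists_atDepth_of_mem_keys ha
  obtain ⟨_, hdb⟩ := exists_atDepth_of_mem_keys hb
  obtain ⟨p, -⟩ := hda.exists_walk hnd
  obtain ⟨q, -⟩ := hdb.exists_walk hnd
  exact p.reachable.symm.trans q.reachable

theorem dist_eq_add_of_atDepth {t : KTree} (hnd : t.keys.Nodup) {pos : List ℕ} {x : ℕ}
    {cs : List KTree} (hP : subtreeAt t pos = some (node x cs)) {c : KTree} (hc : c ∈ cs)
    {u d : ℕ} (hu : AtDepth c u d) {w : ℕ} (hw : w ∈ t.keys) (hwc : w ∉ c.keys) :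
    t.dist u w = d + 1 + t.dist x w := by
  have hut : u ∈ t.keys :=
    (sublist_of_subtreeAt hP).1.subset ((keys_sublist_of_mem hc).subset hu.mem_keys)
  rw [dist, (graph_hangsFrom_of_mem hnd hP hc).dist_eq_add hu.mem_keys hwc
    (reachable_of_mem_keys hnd hut hw), SimpleGraph.dist_comm]
  exact congrArg (· + _) (dist_rootKey_eq_of_atDepth hnd hP (.child hc hu))

theorem graph_adj_of_coe_edges_add_eq {s t a b a' b' : KTree}
    (h : (s.edges : Multiset (ℕ × ℕ)) + a.edges + b.edges = t.edges + a'.edges + b'.edges)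
    {c d : ℕ} (hc : c ∉ a.keys ∧ c ∉ b.keys) (hd : d ∉ a.keys ∧ d ∉ b.keys)
    (hadj : t.graph.Adj c d) : s.graph.Adj c d := by
  have key : ∀ {p q}, p ∉ a.keys ∧ p ∉ b.keys → (p, q) ∈ t.edges → (p, q) ∈ s.edges := by
    intro p q hp he
    have : (p, q) ∈ (s.edges : Multiset (ℕ × ℕ)) + a.edges + b.edges :=
      h ▸ Multiset.mem_add.2 (.inl (Multiset.mem_add.2 (.inl (Multiset.mem_coe.2 he))))
    simp only [Multiset.mem_add, Multiset.mem_coe] at this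
    rcases this with (hs | ha) | hb
    exacts [hs, absurd (mem_keys_of_mem_edges ha).1 hp.1, absurd (mem_keys_of_mem_edges hb).1 hp.2]
  rw [graph, SimpleGraph.fromRel_adj] at hadj ⊢
  exact ⟨hadj.1, hadj.2.imp (key hc) (key hd)⟩

section Swap

variable {t : KTree} {pos : List ℕ} {x : ℕ} {cs : List KTree} {i j : ℕ} {a b a' b' : KTree}

theorem coe_keys_replaceAt_set_set (hP : subtreeAt t pos = some (node x cs)) (hij : i ≠ j)
    (ha : cs[i]? = some a) (hb : cs[j]? = some b) (ha' : a'.rootKey = a.rootKey)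
    (hb' : b'.rootKey = b.rootKey)
    (hkeys : (a.keys : Multiset ℕ) + b.keys = a'.keys + b'.keys) :
    ((replaceAt t pos (node x ((cs.set i a').set j b'))).keys : Multiset ℕ) = t.keys := by
  have := apply_replaceAt_set_set_add (f := fun t => (t.keys : Multiset ℕ))
    (g := fun x _ => {x}) coe_keys_node hP hij ha hb ha' hb'
  rw [add_assoc, add_assoc, hkeys] at this
  exact add_right_cancel this

theorem dist_replaceAt_set_set (hnd : t.keys.Nodup)
    (hP : subtreeAt t pos = some (node x cs)) (hij : i ≠ j)
    (ha : cs[i]? = some a) (hb : cs[j]? = some b) (ha' : a'.rootKey = a.rootKey)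
    (hb' : b'.rootKey = b.rootKey)
    (hkeys : (a.keys : Multiset ℕ) + b.keys = a'.keys + b'.keys)
    {w : ℕ} (hw : w ∈ t.keys) (hwa : w ∉ a.keys) (hwb : w ∉ b.keys) :
    (replaceAt t pos (node x ((cs.set i a').set j b'))).dist x w = t.dist x w := by
  set t' := replaceAt t pos (node x ((cs.set i a').set j b'))
  have hkeys' := coe_keys_replaceAt_set_set hP hij ha hb ha' hb' hkeys
  have hnd' : t'.keys.Nodup := Multiset.coe_nodup.1 (hkeys' ▸ hnd)
  have hmem : ∀ {v}, v ∈ t.keys → v ∈ t'.keys := fun hv => Multiset.mem_coe.1 (hkeys' ▸ hv)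
  have hP' := subtreeAt_replaceAt (node x ((cs.set i a').set j b')) hP
  have hi := (List.getElem?_eq_some_iff.1 ha).1
  have hj := (List.getElem?_eq_some_iff.1 hb).1
  have ha'' : a' ∈ (cs.set i a').set j b' := List.mem_of_getElem? (i := i) (by
    rw [List.getElem?_set_ne hij.symm, List.getElem?_set_self hi])
  have hb'' : b' ∈ (cs.set i a').set j b' := List.mem_set (by simpa using hj) b'
  have hB : ∀ v, v ∈ a.keys ∨ v ∈ b.keys ↔ v ∈ a'.keys ∨ v ∈ b'.keys := fun v => by
    simpa only [Multiset.mem_add, Multiset.mem_coe] using Iff.of_eq (congrArg (v ∈ ·) hkeys)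
  have hcut : t.graph.HangsFrom {v | v ∈ a.keys ∨ v ∈ b.keys} x :=
    (graph_hangsFrom_of_mem hnd hP (List.mem_of_getElem? ha)).union
      (graph_hangsFrom_of_mem hnd hP (List.mem_of_getElem? hb))
  have hcut' : t'.graph.HangsFrom {v | v ∈ a'.keys ∨ v ∈ b'.keys} x :=
    (graph_hangsFrom_of_mem hnd' hP' ha'').union (graph_hangsFrom_of_mem hnd' hP' hb'')
  have hxB : ¬(x ∈ a.keys ∨ x ∈ b.keys) := by
    have hndx := (sublist_of_subtreeAt hP).1.nodup hnd
    rintro (h | h)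
    exacts [not_mem_keys_of_mem hndx (List.mem_of_getElem? ha) h,
      not_mem_keys_of_mem hndx (List.mem_of_getElem? hb) h]
  have hwB : ¬(w ∈ a.keys ∨ w ∈ b.keys) := fun h => h.elim hwa hwb
  have hxt : x ∈ t.keys := (sublist_of_subtreeAt hP).1.subset (by simp)
  have hE := apply_replaceAt_set_set_add (f := fun t => (t.edges : Multiset (ℕ × ℕ)))
    (g := fun x ks => (ks.map (Prod.mk x) : Multiset (ℕ × ℕ))) coe_edges_node hP hij ha hb ha' hb'
  refine le_antisymm (hcut.dist_le hxB (fun c d hc hd => graph_adj_of_coe_edges_add_eq hE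
    (not_or.1 hc) (not_or.1 hd)) hxB hwB (reachable_of_mem_keys hnd hxt hw)) ?_
  rw [hB] at hxB hwB
  exact hcut'.dist_le hxB (fun c d hc hd => graph_adj_of_coe_edges_add_eq hE.symm
    (not_or.1 hc) (not_or.1 hd)) hxB hwB (reachable_of_mem_keys hnd' (hmem hxt) (hmem hw))

theorem dist_add_eq_of_replaceAt_set_set (hnd : t.keys.Nodup)
    (hP : subtreeAt t pos = some (node x cs)) (hij : i ≠ j)
    (ha : cs[i]? = some a) (hb : cs[j]? = some b) (ha' : a'.rootKey = a.rootKey)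
    (hb' : b'.rootKey = b.rootKey)
    (hkeys : (a.keys : Multiset ℕ) + b.keys = a'.keys + b'.keys)
    {u d d' : ℕ} (hu : AtDepth a u d) (hu' : AtDepth b' u d')
    {w : ℕ} (hw : w ∈ t.keys) (hwa : w ∉ a.keys) (hwb : w ∉ b.keys) :
    t.dist u w + d' = (replaceAt t pos (node x ((cs.set i a').set j b'))).dist u w + d := by
  have hkeys' := coe_keys_replaceAt_set_set hP hij ha hb ha' hb' hkeys
  have hb'' : b' ∈ (cs.set i a').set j b' :=
    List.mem_set (by simpa using (List.getElem?_eq_some_iff.1 hb).1) b'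
  have hwb' : w ∉ b'.keys := fun h => by
    have : w ∈ (a.keys : Multiset ℕ) + b.keys := hkeys ▸ Multiset.mem_add.2 (.inr h)
    simp only [Multiset.mem_add, Multiset.mem_coe] at this
    exact this.elim hwa hwb
  rw [dist_eq_add_of_atDepth hnd hP (List.mem_of_getElem? ha) hu hw hwa,
    dist_eq_add_of_atDepth (Multiset.coe_nodup.1 (hkeys' ▸ hnd)) (subtreeAt_replaceAt _ hP) hb''
      hu' (Multiset.mem_coe.1 (hkeys' ▸ hw)) hwb',
    dist_replaceAt_set_set hnd hP hij ha hb ha' hb' hkeys hw hwa hwb]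
  omega

end Swap

theorem size_pos (t : KTree) : 0 < t.size := by
  cases t
  simp [size]

end KTree

theorem pushUp_bounds {k n r t s : ℕ} {d : ℤ} (hd : 1 ≤ d) (hn : n ≤ r + t + s)
    (hsize : 9 * k * (t + s) ≤ n) (hs : 0 < s) (hr : 0 < r) :
    d * (9 * k - 1) * (t + s) ≤ d * r ∧ (8 * k * t : ℤ) < d * r := by
  have hr' : (9 * k - 1 : ℤ) * (t + s) ≤ r := by
    have : ((9 * k * (t + s) : ℕ) : ℤ) ≤ r + t + s := by exact_mod_cast hsize.trans hn
    push_cast at this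
    linarith
  have h8 : (8 * k * t : ℤ) < r := by
    rcases Nat.eq_zero_or_pos k with rfl | hk
    · simp only [CharP.cast_eq_zero, mul_zero, zero_mul]
      omega
    · have : (1 : ℤ) ≤ k := by exact_mod_cast hk
      nlinarith
  constructor
  · calc d * (9 * k - 1) * (t + s) = d * ((9 * k - 1) * (t + s)) := by ring
      _ ≤ d * r := mul_le_mul_of_nonneg_left hr' (by linarith)
  · nlinarith

theorem pushUp_Delta3_general
    (k n : ℕ) (G : KTree) (hn : G.size = n) (hnd : G.keys.Nodup)
    (P : List ℕ) (x : ℕ) (cs : List KTree)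
    (hP : subtreeAt G P = some (node x cs))
    (iT iS : ℕ) (hne : iT ≠ iS)
    (T S : KTree) (hT : cs[iT]? = some T) (hS : cs[iS]? = some S)
    (u : ℕ) (T₀ : KTree) (posT : List ℕ)
    (hTdecomp : T = attachLeaf T₀ posT u)
    (hposT : (subtreeAt T₀ posT).isSome)
    (hlastT : posT.length + 1 = T.height)
    (posS : List ℕ) (hposS : (subtreeAt S posS).isSome)
    (S' : KTree) (hS' : S' = attachLeaf S posS u)
    (hlastS : posS.length + 1 = S'.height)
    (hheights : S'.height < T.height)
    (hsize : 9 * k * (T.size + S.size) ≤ n)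
    (G' : KTree) (hG' : G' = replaceAt G P (node x ((cs.set iT T₀).set iS S')))
    (R : Finset ℕ) (hR : R = G.keys.toFinset \ (T.keys.toFinset ∪ S.keys.toFinset)) :
    ((∑ w ∈ R, (G.dist u w : ℤ)) - ∑ w ∈ R, (G'.dist u w : ℤ)
        = ((T.height : ℤ) - (S'.height : ℤ)) * R.card)
    ∧ (((T.height : ℤ) - (S'.height : ℤ)) * (9 * k - 1) * (T.size + S.size)
        ≤ (∑ w ∈ R, (G.dist u w : ℤ)) - ∑ w ∈ R, (G'.dist u w : ℤ))
    ∧ ((8 * k * T.size : ℤ)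
        < (∑ w ∈ R, (G.dist u w : ℤ)) - ∑ w ∈ R, (G'.dist u w : ℤ)) := by
  obtain ⟨s₀, hs₀⟩ := Option.isSome_iff_exists.1 hposT
  obtain ⟨s₁, hs₁⟩ := Option.isSome_iff_exists.1 hposS
  have huT := atDepth_attachLeaf u hs₀
  rw [← hTdecomp, add_comm, hlastT] at huT
  have huS' := atDepth_attachLeaf u hs₁
  rw [← hS', add_comm, hlastS] at huS'
  have hkeys : (T.keys : Multiset ℕ) + S.keys = T₀.keys + S'.keys := by
    rw [hTdecomp, hS', coe_keys_attachLeaf u hs₀, coe_keys_attachLeaf u hs₁, Multiset.cons_add,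
      Multiset.add_cons]
  have hmemR : ∀ w, w ∈ R ↔ w ∈ G.keys ∧ w ∉ T.keys ∧ w ∉ S.keys := fun w => by
    simp [hR, not_or]
  have hΔ : ∀ w ∈ R, (G.dist u w : ℤ) - G'.dist u w = T.height - S'.height := fun w hw => by
    obtain ⟨hwG, hwT, hwS⟩ := (hmemR w).1 hw
    have := hG' ▸ dist_add_eq_of_replaceAt_set_set hnd hP hne hT hS
      (by rw [hTdecomp, rootKey_attachLeaf]) (by rw [hS', rootKey_attachLeaf]) hkeys huT huS'
      hwG hwT hwS
    omega
  have hcard : n ≤ R.card + T.size + S.size := by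
    rw [hR, ← hn]
    exact List.length_le_card_sdiff_union_add hnd
  have hxR : x ∈ R := by
    have hndx := (sublist_of_subtreeAt hP).1.nodup hnd
    exact (hmemR x).2 ⟨(sublist_of_subtreeAt hP).1.subset (by simp),
      not_mem_keys_of_mem hndx (List.mem_of_getElem? hT),
      not_mem_keys_of_mem hndx (List.mem_of_getElem? hS)⟩
  rw [← Finset.sum_sub_distrib, Finset.sum_congr rfl hΔ, Finset.sum_const, nsmul_eq_mul, mul_comm]
  exact ⟨rfl, pushUp_bounds (by omega) hcard hsize S.size_pos (Finset.card_pos.2 ⟨x, hxR⟩)⟩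

/-- in the setting of the push-up lemma (sibling weakly-complete `k`-ary
subtrees `T` of height `h₂` and `S` of height `h₁ = height S'` measured after the move,
`h₂ > h₁`, with `|V(T)| + |V(S)| ≤ n / (9k)`), the quantity
`Δ₃ = Σ_{w ∈ V(R)} d_G(u,w) − Σ_{w ∈ V(R)} d_G(v,w)` — where `u` is the moved leaf's old
position (distances in the old tree `G`) and `v` its new position (distances in the new
tree `G'`), and `R = G ∖ (V(S) ∪ V(T))` — satisfies
`Δ₃ = (h₂ − h₁)·|V(R)| ≥ (h₂ − h₁)·(9k − 1)·(|V(T)| + |V(S)|) > 8k·|V(T)|`. -/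
theorem pushUp_Delta3
    (k n : ℕ) (G : KTree) (hn : G.size = n) (hnd : G.keys.Nodup)
    (P : List ℕ) (x : ℕ) (cs : List KTree)
    (hP : subtreeAt G P = some (node x cs))
    (iT iS : ℕ) (hne : iT ≠ iS)
    (T S : KTree) (hT : cs[iT]? = some T) (hS : cs[iS]? = some S)
    (u : ℕ) (T₀ : KTree) (posT : List ℕ)
    (hTdecomp : T = attachLeaf T₀ posT u)
    (hposT : (subtreeAt T₀ posT).isSome)
    (hlastT : posT.length + 1 = T.height)
    (posS : List ℕ) (hposS : (subtreeAt S posS).isSome)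
    (S' : KTree) (hS' : S' = attachLeaf S posS u)
    (hlastS : posS.length + 1 = S'.height)
    (hwcT : WeaklyComplete k T) (hwcS' : WeaklyComplete k S')
    (hheights : S'.height < T.height)
    (hsize : 9 * k * (T.size + S.size) ≤ n)
    (G' : KTree) (hG' : G' = replaceAt G P (node x ((cs.set iT T₀).set iS S')))
    (R : Finset ℕ) (hR : R = G.keys.toFinset \ (T.keys.toFinset ∪ S.keys.toFinset)) :
    ((∑ w ∈ R, (G.dist u w : ℤ)) - ∑ w ∈ R, (G'.dist u w : ℤ)
        = ((T.height : ℤ) - (S'.height : ℤ)) * R.card)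
    ∧ (((T.height : ℤ) - (S'.height : ℤ)) * (9 * k - 1) * (T.size + S.size)
        ≤ (∑ w ∈ R, (G.dist u w : ℤ)) - ∑ w ∈ R, (G'.dist u w : ℤ))
    ∧ ((8 * k * T.size : ℤ)
        < (∑ w ∈ R, (G.dist u w : ℤ)) - ∑ w ∈ R, (G'.dist u w : ℤ)) :=
  pushUp_Delta3_general k n G hn hnd P x cs hP iT iS hne T S hT hS u T₀ posT hTdecomp hposT hlastT
    posS hposS S' hS' hlastS hheights hsize G' hG' R hR
end

section
/- If a rooted tree T has all its levels fully filled except possibly the last one, and there are no two sibling subtrees of the same height both having their last level not empty and not full, then one can permute the order of the children of each node of T so that all the leaves on the last level are placed consecutively as far to the left as possible. -/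
theorem List.eq_of_mem_of_sum_eq_mul_length {l : List ℕ} {b m : ℕ} (hle : ∀ n ∈ l, n ≤ b)
    (hsum : l.sum = b * l.length) (hm : m ∈ l) : m = b := by
  by_contra hne
  have hlt := List.sum_lt_sum (fun n => n) (fun _ => b) hle ⟨m, hm, lt_of_le_of_ne (hle m hm) hne⟩
  simp only [List.map_id', List.map_const', List.sum_replicate, smul_eq_mul] at hlt
  linarith

theorem List.ofFn_comp_equiv_perm {α : Type*} {m n : ℕ} (e : Fin m ≃ Fin n) (F : Fin n → α) :
    (List.ofFn (F ∘ e)).Perm (List.ofFn F) := by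
  obtain rfl : m = n := Fin.equiv_iff_eq.mp ⟨e⟩
  exact Equiv.Perm.ofFn_comp_perm e F

theorem List.perm_map_of_finEquiv {α β γ : Type*} {l₁ : List α} {l₂ : List β} {f : α → γ}
    {g : β → γ} (e : Fin l₁.length ≃ Fin l₂.length) (h : ∀ i, f l₁[i] = g l₂[e i]) :
    (l₁.map f).Perm (l₂.map g) := by
  rw [← List.ofFn_getElem_eq_map, ← List.ofFn_getElem_eq_map]
  have hcomp : (fun i : Fin l₁.length => f l₁[(i : ℕ)]) =
      (fun j : Fin l₂.length => g l₂[(j : ℕ)]) ∘ e := funext h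
  rw [hcomp]
  exact List.ofFn_comp_equiv_perm e _

namespace KTree

theorem node_induction {motive : KTree → Prop}
    (h : ∀ x cs, (∀ c ∈ cs, motive c) → motive (node x cs)) : ∀ t, motive t
  | node x cs => h x cs fun c _ => node_induction h c
termination_by t => sizeOf t
decreasing_by
  have := List.sizeOf_lt_of_mem ‹c ∈ cs›
  simp only [KTree.node.sizeOf_spec]
  omega

theorem height_node (x : ℕ) (cs : List KTree) :
    (node x cs).height = (cs.map (·.height + 1)).foldr max 0 := by
  rw [height]
  congr 1
  exact List.attach_map_val (f := fun c : KTree => c.height + 1)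

theorem countAt_zero (t : KTree) : t.countAt 0 = 1 := by
  cases t
  rfl

theorem countAt_succ_node (x : ℕ) (cs : List KTree) (d : ℕ) :
    (node x cs).countAt (d + 1) = (cs.map (·.countAt d)).sum := by
  rw [countAt, List.sum_eq_foldr]
  congr 1
  exact List.attach_map_val (f := fun c : KTree => c.countAt d)

theorem countsAt_succ_node (x : ℕ) (cs : List KTree) (d : ℕ) :
    (node x cs).countsAt (d + 1) = (cs.map (·.countsAt d)).flatten := by
  rw [countsAt]
  congr 1
  exact List.attach_map_val (f := fun c : KTree => c.countsAt d)

theorem length_countsAt (t : KTree) (d : ℕ) : (t.countsAt d).length = t.countAt d := by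
  induction t using node_induction generalizing d with
  | h x cs ih =>
    cases d with
    | zero => rfl
    | succ d =>
      rw [countsAt_succ_node, countAt_succ_node, List.length_flatten, List.map_map]
      exact congrArg List.sum (List.map_congr_left fun c hc => ih c hc d)

theorem sum_countsAt (t : KTree) (d : ℕ) : (t.countsAt d).sum = t.countAt (d + 1) := by
  induction t using node_induction generalizing d with
  | h x cs ih =>
    cases d with
    | zero => simp [countsAt, countAt_succ_node, countAt_zero]
    | succ d =>
      rw [countsAt_succ_node, countAt_succ_node, List.sum_flatten, List.map_map]
      exact congrArg List.sum (List.map_congr_left fun c hc => ih c hc d)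

theorem height_lt_of_mem {x : ℕ} {cs : List KTree} {c : KTree} (hc : c ∈ cs) :
    c.height < (node x cs).height := by
  rw [height_node]
  exact List.le_max_of_le' 0 (List.mem_map_of_mem (f := (·.height + 1)) hc) le_rfl

theorem countAt_eq_zero_of_height_lt (t : KTree) {d : ℕ} (h : t.height < d) : t.countAt d = 0 := by
  induction t using node_induction generalizing d with
  | h x cs ih =>
    cases d with
    | zero => omega
    | succ d =>
      rw [countAt_succ_node, List.sum_eq_zero_iff, List.forall_mem_map]
      intro c hc
      exact ih c hc (by have := height_lt_of_mem (x := x) hc; omega)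

theorem eq_zero_of_mem_countsAt {t : KTree} {d m : ℕ} (h : t.countAt (d + 1) = 0)
    (hm : m ∈ t.countsAt d) : m = 0 :=
  List.sum_eq_zero_iff.mp (by rwa [sum_countsAt]) m hm

section DegLE

variable {k : ℕ} {t : KTree}

theorem DegLE.child {x : ℕ} {cs : List KTree} {c : KTree} (ht : (node x cs).DegLE k)
    (hc : c ∈ cs) : c.DegLE k := by
  rw [DegLE] at ht
  exact ht.2 c hc

theorem DegLE.le_of_mem_countsAt (ht : t.DegLE k) {d m : ℕ} (hm : m ∈ t.countsAt d) : m ≤ k := by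
  induction t using node_induction generalizing d with
  | h x cs ih =>
    cases d with
    | zero =>
      rw [countsAt, List.mem_singleton] at hm
      rw [DegLE] at ht
      exact hm ▸ ht.1
    | succ d =>
      rw [countsAt_succ_node, List.mem_flatten] at hm
      obtain ⟨_, hl, hmc⟩ := hm
      obtain ⟨c, hc, rfl⟩ := List.mem_map.mp hl
      exact ih c hc (ht.child hc) hmc

theorem DegLE.countAt_succ_le (ht : t.DegLE k) (d : ℕ) : t.countAt (d + 1) ≤ k * t.countAt d := by
  rw [← sum_countsAt, ← length_countsAt, mul_comm, ← smul_eq_mul]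
  exact List.sum_le_card_nsmul _ _ fun _ => ht.le_of_mem_countsAt

theorem DegLE.countAt_le_pow (ht : t.DegLE k) (d : ℕ) : t.countAt d ≤ k ^ d := by
  induction d with
  | zero => rw [countAt_zero, pow_zero]
  | succ d ih =>
    calc t.countAt (d + 1) ≤ k * t.countAt d := ht.countAt_succ_le d
      _ ≤ k * k ^ d := Nat.mul_le_mul_left _ ih
      _ = k ^ (d + 1) := (pow_succ' k d).symm

theorem DegLE.eq_of_mem_countsAt (ht : t.DegLE k) {d m : ℕ}
    (h : t.countAt (d + 1) = k * t.countAt d) (hm : m ∈ t.countsAt d) : m = k :=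
  List.eq_of_mem_of_sum_eq_mul_length (fun _ => ht.le_of_mem_countsAt)
    (by rw [sum_countsAt, length_countsAt, h]) hm

end DegLE

theorem reorder_node_iff {x y : ℕ} {cs ds : List KTree} :
    Reorder (node x cs) (node y ds) ↔
      x = y ∧ ∃ e : Fin cs.length ≃ Fin ds.length, ∀ i, Reorder cs[i] ds[e i] := by
  rw [Reorder]

theorem reorder_refl (t : KTree) : Reorder t t := by
  induction t using node_induction with
  | h x cs ih => exact reorder_node_iff.mpr ⟨rfl, Equiv.refl _, fun i => ih _ (List.getElem_mem _)⟩

theorem Reorder.height_eq {a b : KTree} (h : Reorder a b) : a.height = b.height := by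
  induction a using node_induction generalizing b with
  | h x cs ih =>
    obtain ⟨y, ds⟩ := b
    obtain ⟨-, e, he⟩ := reorder_node_iff.mp h
    rw [height_node, height_node]
    have hperm := List.perm_map_of_finEquiv (f := (·.height + 1)) (g := (·.height + 1)) e
      fun i => congrArg (· + 1) (ih _ (List.getElem_mem _) (he i))
    exact hperm.foldr_eq' (fun a _ b _ z => max_left_comm b a z) 0

theorem Reorder.countAt_eq {a b : KTree} (h : Reorder a b) (d : ℕ) : a.countAt d = b.countAt d := by
  induction a using node_induction generalizing b d with
  | h x cs ih =>
    obtain ⟨y, ds⟩ := b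
    obtain ⟨-, e, he⟩ := reorder_node_iff.mp h
    cases d with
    | zero => rw [countAt_zero, countAt_zero]
    | succ d =>
      rw [countAt_succ_node, countAt_succ_node]
      exact (List.perm_map_of_finEquiv e fun i => ih _ (List.getElem_mem _) (he i) d).sum_eq

theorem Reorder.degLE {k : ℕ} {a b : KTree} (h : Reorder a b) (ha : a.DegLE k) : b.DegLE k := by
  induction a using node_induction generalizing b with
  | h x cs ih =>
    obtain ⟨y, ds⟩ := b
    obtain ⟨-, e, he⟩ := reorder_node_iff.mp h
    rw [DegLE] at ha ⊢
    refine ⟨Fin.equiv_iff_eq.mp ⟨e.symm⟩ ▸ ha.1, fun c hc => ?_⟩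
    obtain ⟨j, hj, rfl⟩ := List.getElem_of_mem hc
    have hij := he (e.symm ⟨j, hj⟩)
    simp only [Equiv.apply_symm_apply] at hij
    exact ih _ (List.getElem_mem _) hij (ha.2 _ (List.getElem_mem _))

theorem reorder_node_ofFn {x : ℕ} {cs : List KTree} (σ : Equiv.Perm (Fin cs.length))
    (f : Fin cs.length → KTree) (h : ∀ i, Reorder cs[i] (f i)) :
    Reorder (node x cs) (node x (List.ofFn (f ∘ σ))) := by
  refine reorder_node_iff.mpr ⟨rfl, σ.symm.trans (finCongr List.length_ofFn.symm), fun i => ?_⟩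
  simpa using h i

-- `Packed k t` unfolds to `PackedList k (t.countsAt (t.height - 1))`.
def PackedList (k : ℕ) (L : List ℕ) : Prop :=
  ∀ i j : ℕ, i < j → 0 < L.getD j 0 → L.getD i 0 = k

section PackedList

variable {k : ℕ}

theorem packedList_nil : PackedList k [] := fun _ _ _ h => by simp at h

theorem packedList_singleton (a : ℕ) : PackedList k [a] := fun _ j hij h => by
  rw [List.getD_eq_default _ _ (by simp; omega)] at h
  exact (lt_irrefl 0 h).elim

theorem PackedList.append_of_forall_mem_eq_zero {L Z : List ℕ} (hL : PackedList k L)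
    (hZ : ∀ m ∈ Z, m = 0) : PackedList k (L ++ Z) := by
  intro i j hij hj
  have hjL : j < L.length := by
    by_contra hjL
    rw [List.getD_append_right _ _ _ _ (by omega)] at hj
    by_cases hjZ : j - L.length < Z.length
    · rw [List.getD_eq_getElem _ _ hjZ, hZ _ (List.getElem_mem _)] at hj
      exact lt_irrefl 0 hj
    · rw [List.getD_eq_default _ _ (by omega)] at hj
      exact lt_irrefl 0 hj
  rw [List.getD_append _ _ _ _ hjL] at hj
  rw [List.getD_append _ _ _ _ (hij.trans hjL)]
  exact hL i j hij hj

theorem packedList_of_forall_mem_eq_zero {Z : List ℕ} (hZ : ∀ m ∈ Z, m = 0) : PackedList k Z :=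
  packedList_nil.append_of_forall_mem_eq_zero hZ

theorem PackedList.append_of_forall_mem_eq {A L : List ℕ} (hL : PackedList k L)
    (hA : ∀ m ∈ A, m = k) : PackedList k (A ++ L) := by
  intro i j hij hj
  by_cases hi : i < A.length
  · rw [List.getD_append _ _ _ _ hi, List.getD_eq_getElem _ _ hi]
    exact hA _ (List.getElem_mem _)
  · rw [List.getD_append_right _ _ _ _ (by omega)] at hj ⊢
    exact hL _ _ (by omega) hj

theorem packedList_flatten {Ls : List (List ℕ)} (hLs : ∀ L ∈ Ls, PackedList k L)
    (hpw : Ls.Pairwise fun L M => (∀ m ∈ L, m = k) ∨ ∀ m ∈ M, m = 0) :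
    PackedList k Ls.flatten := by
  induction Ls with
  | nil => exact packedList_nil
  | cons L Ls ih =>
    rw [List.pairwise_cons] at hpw
    rw [List.flatten_cons]
    by_cases hL : ∀ m ∈ L, m = k
    · exact (ih (fun M hM => hLs M (List.mem_cons_of_mem _ hM)) hpw.2).append_of_forall_mem_eq hL
    · refine (hLs L List.mem_cons_self).append_of_forall_mem_eq_zero fun m hm => ?_
      obtain ⟨M, hM, hmM⟩ := List.mem_flatten.mp hm
      exact ((hpw.1 M hM).resolve_left hL) m hmM

end PackedList

theorem packed_of_height_le_one {k : ℕ} {t : KTree} (h : t.height ≤ 1) : Packed k t := by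
  obtain ⟨x, cs⟩ := t
  rw [Packed, Nat.sub_eq_zero_of_le h, countsAt]
  exact packedList_singleton _

/-- `c` is a complete `k`-ary tree of depth `d`, possibly with a partial level `d + 1`. -/
def IsNearlyComplete (k d : ℕ) (c : KTree) : Prop :=
  c.DegLE k ∧ c.height ≤ d + 1 ∧ c.countAt d = k ^ d

def NoPartialSiblings (k : ℕ) (t : KTree) : Prop :=
  ∀ (pos : List ℕ) (x : ℕ) (cs : List KTree), subtreeAt t pos = some (node x cs) →
    ∀ (i j : ℕ) (A B : KTree), i ≠ j → cs[i]? = some A → cs[j]? = some B →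
      A.height = B.height → ¬(LastLevelPartial k A ∧ LastLevelPartial k B)

section Children

variable {k d x : ℕ} {cs : List KTree} {c : KTree}

theorem WeaklyComplete.countAt_child (ht : WeaklyComplete k (node x cs)) (hc : c ∈ cs) {e : ℕ}
    (he : e + 1 < (node x cs).height) : c.countAt e = k ^ e := by
  obtain ⟨hdeg, hfull⟩ := ht
  have hlen : cs.length = k := by
    simpa [countAt_succ_node, countAt_zero] using hfull 1 (by omega)
  have hsum := hfull (e + 1) he
  rw [countAt_succ_node] at hsum
  refine List.eq_of_mem_of_sum_eq_mul_length (fun m hm => ?_) ?_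
    (List.mem_map_of_mem (f := (·.countAt e)) hc)
  · obtain ⟨c', hc', rfl⟩ := List.mem_map.mp hm
    exact (hdeg.child hc').countAt_le_pow e
  · rw [hsum, List.length_map, hlen, pow_succ]

theorem WeaklyComplete.child (ht : WeaklyComplete k (node x cs)) (hc : c ∈ cs) :
    WeaklyComplete k c :=
  ⟨ht.1.child hc, fun _ he => ht.countAt_child hc (by have := height_lt_of_mem (x := x) hc; omega)⟩

theorem WeaklyComplete.isNearlyComplete_child (ht : WeaklyComplete k (node x cs))
    (hd : (node x cs).height = d + 2) (hc : c ∈ cs) : IsNearlyComplete k d c :=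
  have := height_lt_of_mem (x := x) hc
  ⟨ht.1.child hc, by omega, ht.countAt_child hc (by omega)⟩

theorem NoPartialSiblings.child (hs : NoPartialSiblings k (node x cs)) (i : Fin cs.length) :
    NoPartialSiblings k cs[i] := fun pos y es h =>
  hs (i :: pos) y es (by simpa [subtreeAt] using h)

theorem NoPartialSiblings.not_lastLevelPartial (hs : NoPartialSiblings k (node x cs))
    {i j : Fin cs.length} (hij : i ≠ j) (hh : cs[i].height = cs[j].height) :
    ¬(LastLevelPartial k cs[i] ∧ LastLevelPartial k cs[j]) :=
  hs [] x cs rfl i j _ _ (Fin.val_ne_of_ne hij) (List.getElem?_eq_getElem _)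
    (List.getElem?_eq_getElem _) hh

end Children

namespace IsNearlyComplete

variable {k d : ℕ} {a b c : KTree}

theorem of_reorder (hc : IsNearlyComplete k d c) {c' : KTree} (hr : Reorder c c') :
    IsNearlyComplete k d c' :=
  ⟨hr.degLE hc.1, hr.height_eq ▸ hc.2.1, hr.countAt_eq d ▸ hc.2.2⟩

theorem eq_of_mem_countsAt (hc : IsNearlyComplete k d c) (hfull : c.countAt (d + 1) = k ^ (d + 1))
    {m : ℕ} (hm : m ∈ c.countsAt d) : m = k :=
  hc.1.eq_of_mem_countsAt (by rw [hfull, hc.2.2, pow_succ']) hm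

theorem lastLevelPartial (hc : IsNearlyComplete k d c) (h0 : c.countAt (d + 1) ≠ 0)
    (hK : c.countAt (d + 1) ≠ k ^ (d + 1)) : c.height = d + 1 ∧ LastLevelPartial k c := by
  have hh : c.height = d + 1 := by
    refine le_antisymm hc.2.1 (not_lt.mp fun hlt => h0 ?_)
    exact countAt_eq_zero_of_height_lt c hlt
  have hle := hc.1.countAt_succ_le d
  rw [hc.2.2, ← pow_succ'] at hle
  refine ⟨hh, ?_⟩
  rw [LastLevelPartial, hh, Nat.add_sub_cancel, hc.2.2, ← pow_succ']
  exact ⟨by omega, Nat.pos_of_ne_zero h0, lt_of_le_of_ne hle hK⟩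

theorem packedList_countsAt (hc : IsNearlyComplete k d c) (hp : Packed k c) :
    PackedList k (c.countsAt d) := by
  rcases hc.2.1.lt_or_eq with hlt | heq
  · exact packedList_of_forall_mem_eq_zero fun _ =>
      eq_zero_of_mem_countsAt (countAt_eq_zero_of_height_lt c hlt)
  · rw [show d = c.height - 1 by omega]
    exact hp

theorem full_or_empty_of_countAt_le (ha : IsNearlyComplete k d a) (hb : IsNearlyComplete k d b)
    (hle : b.countAt (d + 1) ≤ a.countAt (d + 1))
    (hnp : a.height = b.height → ¬(LastLevelPartial k a ∧ LastLevelPartial k b)) :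
    a.countAt (d + 1) = k ^ (d + 1) ∨ b.countAt (d + 1) = 0 := by
  by_contra! h
  have haK := ha.1.countAt_le_pow (d + 1)
  obtain ⟨hha, hpa⟩ := ha.lastLevelPartial (by omega) h.1
  obtain ⟨hhb, hpb⟩ := hb.lastLevelPartial h.2 (by omega)
  exact hnp (hha.trans hhb.symm) ⟨hpa, hpb⟩

end IsNearlyComplete

theorem packed_node_of_pairwise {k d x : ℕ} {ds : List KTree} (hh : (node x ds).height = d + 2)
    (hds : ∀ c ∈ ds, IsNearlyComplete k d c ∧ Packed k c)
    (hpw : ds.Pairwise fun a b => a.countAt (d + 1) = k ^ (d + 1) ∨ b.countAt (d + 1) = 0) :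
    Packed k (node x ds) := by
  change PackedList k ((node x ds).countsAt ((node x ds).height - 1))
  rw [hh, show d + 2 - 1 = d + 1 from rfl, countsAt_succ_node]
  refine packedList_flatten ?_ (List.pairwise_map.mpr (hpw.imp_of_mem fun ha _ h => ?_))
  · simp only [List.mem_map]
    rintro _ ⟨c, hc, rfl⟩
    exact (hds c hc).1.packedList_countsAt (hds c hc).2
  · exact h.imp (fun hfull _ => (hds _ ha).1.eq_of_mem_countsAt hfull)
      (fun h0 _ => eq_zero_of_mem_countsAt h0)

theorem exists_reorder_packed {k : ℕ} (t : KTree) (ht : WeaklyComplete k t)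
    (hs : NoPartialSiblings k t) : ∃ t', Reorder t t' ∧ Packed k t' := by
  induction t using node_induction with
  | h x cs ih =>
    rcases le_or_gt (node x cs).height 1 with hh | hh
    · exact ⟨_, reorder_refl _, packed_of_height_le_one hh⟩
    obtain ⟨d, hd⟩ : ∃ d, (node x cs).height = d + 2 := ⟨_, (Nat.sub_add_cancel hh).symm⟩
    have hnc : ∀ i : Fin cs.length, IsNearlyComplete k d cs[i] := fun i =>
      ht.isNearlyComplete_child hd (List.getElem_mem _)
    choose c' hc' using fun i : Fin cs.length =>
      ih cs[i] (List.getElem_mem _) (ht.child (List.getElem_mem _)) (hs.child i)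
    obtain ⟨σ, hanti⟩ : ∃ σ : Equiv.Perm (Fin cs.length),
        Antitone fun i => cs[σ i].countAt (d + 1) :=
      ⟨_, monotone_toDual_comp_iff.mp <|
        Tuple.monotone_sort fun i : Fin cs.length => OrderDual.toDual (cs[i].countAt (d + 1))⟩
    have hreo := reorder_node_ofFn (x := x) σ c' fun i => (hc' i).1
    refine ⟨_, hreo, packed_node_of_pairwise (hreo.height_eq ▸ hd) ?_ ?_⟩
    · simp only [List.mem_ofFn, Function.comp_apply]
      rintro _ ⟨i, rfl⟩
      exact ⟨(hnc _).of_reorder (hc' _).1, (hc' _).2⟩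
    · refine List.pairwise_ofFn.mpr fun i j hij => ?_
      simp only [Function.comp_apply, ← (hc' _).1.countAt_eq]
      exact (hnc _).full_or_empty_of_countAt_le (hnc _) (hanti hij.le)
        (hs.not_lastLevelPartial (σ.injective.ne hij.ne))

end KTree

open KTree

/-- if a rooted `k`-ary tree `t` has all its levels fully filled except
possibly the last one, and there are no two sibling subtrees of the same height both
having their last level not empty and not full, then one can permute the order of the
children of each node of `t` (relation `Reorder`) so that all the leaves on the last
level are placed consecutively as far to the left as possible (predicate `Packed`). -/
theorem reorder_to_leftmost_leaves
    (k : ℕ) (t : KTree) (hdeg : DegLE k t)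
    (hfull : ∀ d, d < t.height → t.countAt d = k ^ d)
    (hnosib : ∀ (pos : List ℕ) (x : ℕ) (cs : List KTree),
      subtreeAt t pos = some (node x cs) →
      ∀ (i j : ℕ) (A B : KTree), i ≠ j → cs[i]? = some A → cs[j]? = some B →
        A.height = B.height → ¬(LastLevelPartial k A ∧ LastLevelPartial k B)) :
    ∃ t' : KTree, Reorder t t' ∧ Packed k t' :=
  exists_reorder_packed t ⟨hdeg, hfull⟩ hnosib
end
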